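/- For p ≥ 2, q = p/(p-1), δ = q(q-1)/8, and u, v ≥ 0 with u^p ≤ v^q and v > 0, the function φ(u,v) = u^p + v^q + δu²v^{2−q} satisfies u·∂φ/∂u + v·∂φ/∂v − φ(u,v) ≥ δ(v^{q−2}·v² + v^{2−q}·u²). -/

import Mathlib

/-!
Each term of `φ(u,v) = u^p + v^q + δ u² v^{2-q}` is a monomial `u^a v^b`, on which
`u ∂_u + v ∂_v` acts as multiplication by `a + b`. Hence
`u ∂_u φ + v ∂_v φ - φ = (p-1) u^p + (q-1) v^q + (3-q) δ u² v^{2-q}`,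
and since `1 < q ≤ 2` and `0 ≤ δ ≤ q - 1`, this dominates `δ (v^q + u² v^{2-q})`
term by term.
-/

open Real

lemma div_sub_one_mem_Ioc {p : ℝ} (hp : 2 ≤ p) : p / (p - 1) ∈ Set.Ioc 1 2 := by
  have hp1 : 0 < p - 1 := by linarith
  constructor
  · rw [lt_div_iff₀ hp1]; linarith
  · rw [div_le_iff₀ hp1]; linarith

lemma mul_rpow_sub_one_of_pos {x : ℝ} (hx : 0 < x) (a : ℝ) : x * x ^ (a - 1) = x ^ a := by
  rw [rpow_sub_one hx.ne', mul_div_cancel₀ _ hx.ne']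

lemma mul_rpow_sub_one {x a : ℝ} (hx : 0 ≤ x) (ha : a ≠ 0) : x * x ^ (a - 1) = x ^ a := by
  rw [← rpow_one_add' hx (by simpa using ha), add_sub_cancel]

lemma rpow_sub_two_mul_sq {x : ℝ} (hx : 0 < x) (a : ℝ) : x ^ (a - 2) * x ^ 2 = x ^ a := by
  rw [← rpow_natCast, ← rpow_add hx]
  norm_num

lemma euler_defect_eq {p q δ u v : ℝ} (hp : p ≠ 0) (hu : 0 ≤ u) (hv : 0 < v) :
    u * (p * u ^ (p - 1) + 2 * δ * u * v ^ (2 - q)) +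
      v * (q * v ^ (q - 1) + (2 - q) * δ * u ^ 2 * v ^ (1 - q)) -
      (u ^ p + v ^ q + δ * u ^ 2 * v ^ (2 - q)) =
    (p - 1) * u ^ p + (q - 1) * v ^ q + (3 - q) * δ * u ^ 2 * v ^ (2 - q) := by
  have hup := mul_rpow_sub_one hu hp
  have hvq := mul_rpow_sub_one_of_pos hv q
  have hv2q : v * v ^ (1 - q) = v ^ (2 - q) := by
    rw [show 1 - q = 2 - q - 1 by ring, mul_rpow_sub_one_of_pos hv]
  linear_combination p * hup + q * hvq + (2 - q) * δ * u ^ 2 * hv2q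

theorem stmt_1_general (p q δ u v : ℝ) (hp : 2 ≤ p) (hq : q = p / (p - 1))
    (hδ : δ = q * (q - 1) / 8) (hu : 0 ≤ u) (hv : 0 < v) :
    u * (p * u ^ (p - 1) + 2 * δ * u * v ^ (2 - q)) +
      v * (q * v ^ (q - 1) + (2 - q) * δ * u ^ 2 * v ^ (1 - q)) -
      (u ^ p + v ^ q + δ * u ^ 2 * v ^ (2 - q)) ≥
    δ * (v ^ (q - 2) * v ^ 2 + v ^ (2 - q) * u ^ 2) := by
  obtain ⟨hq1, hq2⟩ : 1 < q ∧ q ≤ 2 := hq ▸ div_sub_one_mem_Ioc hp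
  have hδ0 : 0 ≤ δ := by rw [hδ]; nlinarith
  have hδq : δ ≤ q - 1 := by rw [hδ]; nlinarith
  rw [euler_defect_eq (by linarith) hu hv, rpow_sub_two_mul_sq hv]
  have hup : 0 ≤ (p - 1) * u ^ p := mul_nonneg (by linarith) (rpow_nonneg hu p)
  have hvq : 0 ≤ (q - 1 - δ) * v ^ q := mul_nonneg (by linarith) (rpow_pos_of_pos hv q).le
  have hmixed : 0 ≤ (2 - q) * δ * (u ^ 2 * v ^ (2 - q)) :=
    mul_nonneg (mul_nonneg (by linarith) hδ0) (by positivity)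
  linarith

theorem stmt_1 (p q δ u v : ℝ) (hp : 2 ≤ p) (hq : q = p / (p - 1))
    (hδ : δ = q * (q - 1) / 8) (hu : 0 ≤ u) (hv : 0 < v)
    (huv : u ^ p ≤ v ^ q) :
    u * (p * u ^ (p - 1) + 2 * δ * u * v ^ (2 - q)) +
      v * (q * v ^ (q - 1) + (2 - q) * δ * u ^ 2 * v ^ (1 - q)) -
      (u ^ p + v ^ q + δ * u ^ 2 * v ^ (2 - q)) ≥
    δ * (v ^ (q - 2) * v ^ 2 + v ^ (2 - q) * u ^ 2) :=
  stmt_1_general p q δ u v hp hq hδ hu hv
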